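/- arXiv:2011.01343 — 2 statements merged into one kernel-verified Lean document; each statement's English description precedes it below -/
import Mathlib

section
/- Define the stopping time τ^μ := inf{ t ∈ ℕ : g^μ(S_t) ≥ Y_t }. Then: (a) for every c ∈ ℝ, P( sup_{s ≤ τ^μ} Y_s ≥ c ) ≤ Leb{ ξ ∈ (0,1] : SQ^μ(ξ) ≥ c }, i.e., the maximum of Y up to τ^μ is stochastically dominated by the Hardy–Littlewood transform SQ^μ(𝒰) of μ, where 𝒰 is uniform on (0,1]; and (b) for every c ∈ ℝ, P( τ^μ < ∞ and Y_{τ^μ} ≥ c ) ≤ μ̄(c), i.e., the stopped statistic Y_{τ^μ} is stochastically dominated by μ. -/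
open MeasureTheory Filter Set

/-- The running maximum `S t = max_{s ≤ t} M s`. -/
noncomputable def runMax {Ω : Type*} (M : ℕ → Ω → ℝ) (t : ℕ) (ω : Ω) : ℝ :=
  (Finset.range (t + 1)).sup' (Finset.nonempty_range_iff.mpr (Nat.succ_ne_zero t))
    (fun s => M s ω)

/-- The ultimate supremum `S_∞ = sup_t M_t`. -/
noncomputable def supAll {Ω : Type*} (M : ℕ → Ω → ℝ) (ω : Ω) : ℝ :=
  ⨆ t : ℕ, M t ω

/-- `𝒢 s = ∫_0^1 g(s/u) du`. -/
noncomputable def calG (g : ℝ → ℝ) (s : ℝ) : ℝ :=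
  ∫ u in Set.Ioc (0 : ℝ) 1, g (s / u)

/-- `𝒢′ s = ∫_s^∞ (g(x) − g(s))/x² dx`. -/
noncomputable def calG' (g : ℝ → ℝ) (s : ℝ) : ℝ :=
  ∫ x in Set.Ioi s, (g x - g s) / x ^ 2

/-- The Azéma–Yor process `Y t = 𝒢(S t) − (S t − M t)·𝒢′(S t)`. -/
noncomputable def ayProc {Ω : Type*} (g : ℝ → ℝ) (M : ℕ → Ω → ℝ) (t : ℕ) (ω : Ω) : ℝ :=
  calG g (runMax M t ω) - (runMax M t ω - M t ω) * calG' g (runMax M t ω)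

/-- Complementary CDF `μ̄(x) = μ([x,∞))`. -/
noncomputable def cCDF (μ : Measure ℝ) (x : ℝ) : ℝ := (μ (Set.Ici x)).toReal

/-- Tail quantile function `μ̄⁻¹(ξ) = inf{x ≥ 0 : μ̄(x) < ξ}`. -/
noncomputable def tailQuantile (μ : Measure ℝ) (ξ : ℝ) : ℝ :=
  sInf {x : ℝ | 0 ≤ x ∧ cCDF μ x < ξ}

/-- Superquantile `SQ(ξ) = (1/ξ) ∫_0^ξ μ̄⁻¹(λ) dλ`. -/
noncomputable def superQuantile (μ : Measure ℝ) (ξ : ℝ) : ℝ :=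
  (1 / ξ) * ∫ l in Set.Ioc (0 : ℝ) ξ, tailQuantile μ l

/-- `g^μ(x) = μ̄⁻¹(1/x)`. -/
noncomputable def gMu (μ : Measure ℝ) (x : ℝ) : ℝ := tailQuantile μ (1 / x)

/-- The stopping time `τ^μ = inf{t : g^μ(S_t) ≥ Y_t}`, valued in `ℕ ∪ {∞}`. -/
noncomputable def tauMu {Ω : Type*} (μ : Measure ℝ) (M : ℕ → Ω → ℝ) (ω : Ω) : ℕ∞ :=
  ⨅ t ∈ {t : ℕ | ayProc (gMu μ) M t ω ≤ gMu μ (runMax M t ω)}, (t : ℕ∞)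

/-!
Since `𝒢′ ≥ 0`, the Azéma–Yor process satisfies `Y_t ≤ 𝒢(S_t) = SQ^μ(1/S_t)`, and at `τ^μ` the
stopping rule gives `Y_τ ≤ g^μ(S_τ) = μ̄⁻¹(1/S_τ)`. Both bounds are antitone in `1/S`, so on the
event of (a), resp. (b), the running maximum must exceed `1/r` for every `r` above
`Leb{SQ^μ ≥ c}`, resp. `μ̄(c)`. Ville's inequality `P(sup_t M_t ≥ K) ≤ 1/K` for the nonnegative
supermartingale `M`, obtained by optional stopping at the first time `M` enters `[K, ∞)`,
bounds both probabilities by `r`.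
-/

open scoped ENNReal Topology

namespace MeasureTheory.Supermartingale

variable {Ω : Type*} {m0 : MeasurableSpace Ω} {P : Measure Ω}
  {ℱ : Filtration ℕ m0} {M : ℕ → Ω → ℝ}

theorem integral_stoppedValue_le [IsFiniteMeasure P] (hsuper : Supermartingale M ℱ P)
    {τ : Ω → ℕ∞} (hτ : IsStoppingTime ℱ τ) {n : ℕ} (hτn : ∀ ω, τ ω ≤ n) :
    ∫ ω, stoppedValue M τ ω ∂P ≤ ∫ ω, M 0 ω ∂P := by
  have h := hsuper.neg.expected_stoppedValue_mono (isStoppingTime_const ℱ 0) hτ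
    (fun ω => zero_le) hτn
  simpa [stoppedValue, integral_neg] using h

theorem mul_measureReal_le_integral [IsFiniteMeasure P] (hsuper : Supermartingale M ℱ P)
    (hnonneg : 0 ≤ M) (K : ℝ) (n : ℕ) : K * P.real {ω | ∃ t ≤ n, K ≤ M t ω} ≤ ∫ ω, M 0 ω ∂P := by
  set τ : Ω → ℕ∞ := fun ω => (hittingBtwn M (Ici K) 0 n ω : ℕ)
  have hτ : IsStoppingTime ℱ τ :=
    hsuper.stronglyAdapted.adapted.isStoppingTime_hittingBtwn measurableSet_Ici
  have hτn : ∀ ω, τ ω ≤ n := fun ω => ENat.natCast_le_natCast.2 (hittingBtwn_le ω)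
  have hhit : {ω | ∃ t ≤ n, K ≤ M t ω} ⊆ {ω | K ≤ stoppedValue M τ ω} :=
    fun ω ⟨t, ht, hKt⟩ => stoppedValue_hittingBtwn_mem ⟨t, ⟨zero_le, ht⟩, hKt⟩
  rcases le_or_gt K 0 with hK | hK
  · exact (mul_nonpos_of_nonpos_of_nonneg hK measureReal_nonneg).trans
      (integral_nonneg (hnonneg 0))
  calc K * P.real {ω | ∃ t ≤ n, K ≤ M t ω} ≤ K * P.real {ω | K ≤ stoppedValue M τ ω} :=
        mul_le_mul_of_nonneg_left (measureReal_mono hhit) hK.le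
    _ ≤ ∫ ω, stoppedValue M τ ω ∂P :=
        mul_meas_ge_le_integral_of_nonneg (ae_of_all _ fun ω => hnonneg _ ω)
          (integrable_stoppedValue ℕ hτ hsuper.integrable hτn) K
    _ ≤ ∫ ω, M 0 ω ∂P := hsuper.integral_stoppedValue_le hτ hτn

theorem ville_ineq [IsFiniteMeasure P] (hsuper : Supermartingale M ℱ P) (hnonneg : 0 ≤ M)
    {K : ℝ} (hK : 0 < K) :
    P {ω | ∃ t, K ≤ M t ω} ≤ ENNReal.ofReal ((∫ ω, M 0 ω ∂P) / K) := by
  have hmono : Monotone fun n => {ω | ∃ t ≤ n, K ≤ M t ω} :=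
    fun n m hnm ω ⟨t, ht, hKt⟩ => ⟨t, ht.trans hnm, hKt⟩
  have hunion : {ω | ∃ t, K ≤ M t ω} = ⋃ n, {ω | ∃ t ≤ n, K ≤ M t ω} := by
    ext ω
    simp only [mem_ofPred_eq, mem_iUnion]
    exact ⟨fun ⟨t, hKt⟩ => ⟨t, t, le_rfl, hKt⟩, fun ⟨_, t, _, hKt⟩ => ⟨t, hKt⟩⟩
  rw [hunion, hmono.measure_iUnion]
  refine iSup_le fun n => ?_
  rw [← ofReal_measureReal]
  exact ENNReal.ofReal_le_ofReal
    ((le_div_iff₀' hK).2 (hsuper.mul_measureReal_le_integral hnonneg K n))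

theorem measure_le_of_forall_subset_exists_le [IsProbabilityMeasure P]
    (hsuper : Supermartingale M ℱ P) (hnonneg : 0 ≤ M) (hint : ∫ ω, M 0 ω ∂P ≤ 1)
    {E : Set Ω} {x : ℝ≥0∞}
    (hE : ∀ r : ℝ, 0 < r → r < 1 → x < ENNReal.ofReal r → E ⊆ {ω | ∃ t, r⁻¹ ≤ M t ω}) :
    P E ≤ x := by
  refine le_of_forall_gt_imp_ge_of_dense fun y hxy => ?_
  rcases le_or_gt 1 y with hy | hy
  · exact prob_le_one.trans hy
  obtain ⟨r, hr, rfl⟩ : ∃ r : ℝ, 0 < r ∧ ENNReal.ofReal r = y :=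
    ⟨y.toReal, ENNReal.toReal_pos (pos_of_gt hxy).ne' hy.ne_top, ENNReal.ofReal_toReal hy.ne_top⟩
  calc P E ≤ P {ω | ∃ t, r⁻¹ ≤ M t ω} :=
        measure_mono (hE r hr (by simpa using hy) hxy)
    _ ≤ ENNReal.ofReal ((∫ ω, M 0 ω ∂P) / r⁻¹) := hsuper.ville_ineq hnonneg (inv_pos.2 hr)
    _ ≤ ENNReal.ofReal r := by
        rw [div_inv_eq_mul]
        exact ENNReal.ofReal_le_ofReal (mul_le_of_le_one_left hr.le hint)

end MeasureTheory.Supermartingale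

section Quantile

variable {μ : Measure ℝ}

theorem tailQuantile_nonneg (ξ : ℝ) : 0 ≤ tailQuantile μ ξ :=
  Real.sInf_nonneg fun _ hx => hx.1

theorem tailQuantile_le {ξ x : ℝ} (hx : 0 ≤ x) (h : cCDF μ x < ξ) : tailQuantile μ ξ ≤ x :=
  csInf_le ⟨0, fun _ hy => hy.1⟩ ⟨hx, h⟩

theorem le_cCDF_of_lt_tailQuantile {ξ x : ℝ} (hx : 0 ≤ x) (h : x < tailQuantile μ ξ) :
    ξ ≤ cCDF μ x :=
  not_lt.1 fun hlt => h.not_ge (tailQuantile_le hx hlt)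

variable [IsFiniteMeasure μ]

theorem exists_cCDF_lt {ξ : ℝ} (hξ : 0 < ξ) : ∃ x, 0 ≤ x ∧ cCDF μ x < ξ := by
  have htail : Tendsto (fun x => μ (Ici x)) atTop (𝓝 0) := by
    have hempty : ⋂ x : ℝ, Ici x = ∅ := eq_empty_of_forall_notMem fun y hy =>
      (lt_add_one y).not_ge (mem_iInter.1 hy (y + 1))
    simpa [Function.comp_def, hempty] using tendsto_measure_iInter_atTop (μ := μ)
      (fun x : ℝ => measurableSet_Ici.nullMeasurableSet) antitone_Ici ⟨0, measure_ne_top _ _⟩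
  have h := htail.eventually_lt_const (ENNReal.ofReal_pos.2 hξ)
  obtain ⟨x, hx⟩ := (h.and (eventually_ge_atTop 0)).exists
  exact ⟨x, hx.2, ENNReal.toReal_lt_of_lt_ofReal hx.1⟩

theorem tailQuantile_antitoneOn : AntitoneOn (tailQuantile μ) (Ioi 0) := fun _ ha _ _ hab =>
  csInf_le_csInf ⟨0, fun _ hy => hy.1⟩ (exists_cCDF_lt ha) fun _ hx => ⟨hx.1, hx.2.trans_le hab⟩

theorem ofReal_le_measure_Ici_of_le_tailQuantile {ξ c : ℝ} (hc : 0 < c)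
    (h : c ≤ tailQuantile μ ξ) : ENNReal.ofReal ξ ≤ μ (Ici c) := by
  obtain ⟨u, hu_mono, hu_mem, hu_lim⟩ := exists_seq_strictMono_tendsto' hc
  have hIci : ⋂ n, Ici (u n) = Ici c := by
    ext x
    simp only [mem_iInter, mem_Ici]
    exact ⟨fun hx => le_of_tendsto' hu_lim hx, fun hx n => (hu_mem n).2.le.trans hx⟩
  have hanti : Antitone fun n => Ici (u n) := fun _ _ hmn =>
    Ici_subset_Ici.2 (hu_mono.monotone hmn)
  rw [← hIci, hanti.measure_iInter
    (fun n => measurableSet_Ici.nullMeasurableSet) ⟨0, measure_ne_top _ _⟩]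
  refine le_iInf fun n => ?_
  rw [← ENNReal.ofReal_toReal (measure_ne_top μ (Ici (u n)))]
  exact ENNReal.ofReal_le_ofReal
    (le_cCDF_of_lt_tailQuantile (hu_mem n).1.le ((hu_mem n).2.trans_le h))

end Quantile

theorem pos_of_measure_Ici_lt_one {μ : Measure ℝ} [IsProbabilityMeasure μ]
    (hsupp : μ (Iio 0) = 0) {c : ℝ} (h : μ (Ici c) < 1) : 0 < c := by
  by_contra! hc
  have hμ0 : μ (Ici 0) = 1 := by
    rw [← compl_Iio, prob_compl_eq_one_iff measurableSet_Iio]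
    exact hsupp
  exact h.not_ge (hμ0 ▸ measure_mono (Ici_subset_Ici.2 hc))

theorem lintegral_measure_Ici_lt_top {μ : Measure ℝ} (hmean : Integrable id μ) :
    ∫⁻ t in Ioi 0, μ (Ici t) < ∞ := by
  have hlayer := lintegral_eq_lintegral_meas_le μ (f := fun x => max x 0)
    (ae_of_all _ fun x => le_max_right x 0) (measurable_id.max measurable_const).aemeasurable
  have hset : ∀ t ∈ Ioi (0 : ℝ), μ {x | t ≤ max x 0} = μ (Ici t) := fun t ht => by
    congr 1; ext x; simp [not_le.2 (mem_Ioi.1 ht)]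
  rw [setLIntegral_congr_fun measurableSet_Ioi hset] at hlayer
  rw [← hlayer]
  simpa [ENNReal.ofReal_max] using hmean.lintegral_lt_top

section SuperQuantile

variable {μ : Measure ℝ}

theorem setIntegral_Ioc_comp_mul_left {E : Type*} [NormedAddCommGroup E] [NormedSpace ℝ E]
    (f : ℝ → E) {ξ : ℝ} (hξ : 0 < ξ) :
    ∫ u in Ioc 0 1, f (ξ * u) = ξ⁻¹ • ∫ l in Ioc 0 ξ, f l := by
  rw [← intervalIntegral.integral_of_le zero_le_one, ← intervalIntegral.integral_of_le hξ.le,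
    intervalIntegral.integral_comp_mul_left f hξ.ne', mul_zero, mul_one]

theorem superQuantile_eq_integral_comp_mul {ξ : ℝ} (hξ : 0 < ξ) :
    superQuantile μ ξ = ∫ u in Ioc 0 1, tailQuantile μ (ξ * u) := by
  rw [setIntegral_Ioc_comp_mul_left _ hξ, superQuantile, one_div, smul_eq_mul]

variable [IsFiniteMeasure μ]

theorem integrableOn_tailQuantile (hmean : Integrable id μ) :
    IntegrableOn (tailQuantile μ) (Ioc 0 1) := by
  have hmeas : AEMeasurable (tailQuantile μ) (volume.restrict (Ioc 0 1)) :=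
    aemeasurable_restrict_of_antitoneOn measurableSet_Ioc
      (tailQuantile_antitoneOn.mono Ioc_subset_Ioi_self)
  refine ⟨hmeas.aestronglyMeasurable, ?_⟩
  -- layer cake, with `{l ∈ (0, 1] | t < μ̄⁻¹ l} ⊆ (0, μ̄ t]`
  rw [hasFiniteIntegral_iff_ofReal (ae_of_all _ tailQuantile_nonneg),
    lintegral_eq_lintegral_meas_lt _ (ae_of_all _ tailQuantile_nonneg) hmeas]
  refine lt_of_le_of_lt (setLIntegral_mono' measurableSet_Ioi fun t ht => ?_)
    (lintegral_measure_Ici_lt_top hmean)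
  calc volume.restrict (Ioc 0 1) {l | t < tailQuantile μ l} ≤ volume (Ioc 0 (cCDF μ t)) := by
        rw [Measure.restrict_apply' measurableSet_Ioc]
        exact measure_mono fun l hl => ⟨hl.2.1, le_cCDF_of_lt_tailQuantile (le_of_lt ht) hl.1⟩
    _ = μ (Ici t) := by
        rw [Real.volume_Ioc, sub_zero, cCDF, ENNReal.ofReal_toReal (measure_ne_top _ _)]

theorem integrableOn_tailQuantile_comp_mul (hmean : Integrable id μ) {ξ : ℝ} (hξ : 0 < ξ)
    (hξ1 : ξ ≤ 1) : IntegrableOn (fun u => tailQuantile μ (ξ * u)) (Ioc 0 1) := by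
  have h : IntervalIntegrable (tailQuantile μ) volume 0 ξ :=
    (intervalIntegrable_iff_integrableOn_Ioc_of_le hξ.le).2
      ((integrableOn_tailQuantile hmean).mono_set (Ioc_subset_Ioc_right hξ1))
  simpa [hξ.ne', intervalIntegrable_iff_integrableOn_Ioc_of_le] using h.comp_mul_left (c := ξ)

theorem superQuantile_antitoneOn (hmean : Integrable id μ) :
    AntitoneOn (superQuantile μ) (Ioc 0 1) := by
  intro a ha b hb hab
  rw [superQuantile_eq_integral_comp_mul ha.1, superQuantile_eq_integral_comp_mul hb.1]
  exact setIntegral_mono_on (integrableOn_tailQuantile_comp_mul hmean hb.1 hb.2)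
    (integrableOn_tailQuantile_comp_mul hmean ha.1 ha.2) measurableSet_Ioc fun u hu =>
      tailQuantile_antitoneOn (mul_pos ha.1 hu.1) (mul_pos hb.1 hu.1)
        (mul_le_mul_of_nonneg_right hab hu.1.le)

theorem superQuantile_lt_of_volume_lt (hmean : Integrable id μ) {c r : ℝ} (hr1 : r ≤ 1)
    (hvol : volume {ξ | ξ ∈ Ioc 0 1 ∧ c ≤ superQuantile μ ξ} < ENNReal.ofReal r) :
    superQuantile μ r < c := by
  have hr : 0 < r := ENNReal.ofReal_pos.1 (pos_of_gt hvol)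
  by_contra! hc
  have hsub : Ioc 0 r ⊆ {ξ | ξ ∈ Ioc 0 1 ∧ c ≤ superQuantile μ ξ} := fun ξ hξ =>
    ⟨⟨hξ.1, hξ.2.trans hr1⟩,
      hc.trans (superQuantile_antitoneOn hmean ⟨hξ.1, hξ.2.trans hr1⟩ ⟨hr, hr1⟩ hξ.2)⟩
  exact hvol.not_ge (by simpa [Real.volume_Ioc] using measure_mono (μ := volume) hsub)

end SuperQuantile

section AzemaYor

variable {μ : Measure ℝ}

theorem calG_gMu {s : ℝ} (hs : 0 < s) : calG (gMu μ) s = superQuantile μ s⁻¹ := by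
  rw [superQuantile_eq_integral_comp_mul (inv_pos.2 hs), calG]
  congr 1 with u
  rw [gMu, one_div_div, div_eq_inv_mul]

theorem calG'_nonneg {g : ℝ → ℝ} {s : ℝ} (hg : MonotoneOn g (Ici s)) : 0 ≤ calG' g s :=
  setIntegral_nonneg measurableSet_Ioi fun x hx =>
    div_nonneg (sub_nonneg.2 (hg (mem_Ici.2 le_rfl) (mem_Ici.2 hx.out.le) hx.out.le))
      (sq_nonneg x)

theorem gMu_monotoneOn [IsFiniteMeasure μ] : MonotoneOn (gMu μ) (Ioi 0) := fun _ ha _ hb hab =>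
  tailQuantile_antitoneOn (mem_Ioi.2 (one_div_pos.2 hb)) (mem_Ioi.2 (one_div_pos.2 ha))
    (one_div_le_one_div_of_le ha hab)

end AzemaYor

theorem ENat.toNat_biInf_natCast_mem {s : Set ℕ} (h : ⨅ t ∈ s, (t : ℕ∞) ≠ ⊤) :
    (⨅ t ∈ s, (t : ℕ∞)).toNat ∈ s := by
  have hs : s.Nonempty := nonempty_iff_ne_empty.2 fun hs => h (by simp [hs])
  rw [← ENat.natCast_sInf hs, ENat.toNat_natCast]
  exact Nat.sInf_mem hs

section RunningMax

variable {Ω : Type*} {M : ℕ → Ω → ℝ} {μ : Measure ℝ}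

theorem le_runMax {s t : ℕ} (hst : s ≤ t) (ω : Ω) : M s ω ≤ runMax M t ω :=
  Finset.le_sup' (fun s => M s ω) (Finset.mem_range_succ_iff.2 hst)

theorem one_le_runMax {ω : Ω} (h0 : M 0 ω = 1) (t : ℕ) : 1 ≤ runMax M t ω :=
  h0 ▸ le_runMax (Nat.zero_le t) ω

theorem exists_runMax_eq (t : ℕ) (ω : Ω) : ∃ s, runMax M t ω = M s ω := by
  obtain ⟨s, -, hs⟩ := Finset.exists_mem_eq_sup' _ (fun s => M s ω)
  exact ⟨s, hs⟩

theorem ayProc_le_calG {g : ℝ → ℝ} {t : ℕ} {ω : Ω} (hg : 0 ≤ calG' g (runMax M t ω)) :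
    ayProc g M t ω ≤ calG g (runMax M t ω) :=
  sub_le_self _ (mul_nonneg (sub_nonneg.2 (le_runMax le_rfl ω)) hg)

theorem ayProc_tauMu_le_gMu {ω : Ω} (hτ : tauMu μ M ω ≠ ⊤) :
    ayProc (gMu μ) M (tauMu μ M ω).toNat ω ≤ gMu μ (runMax M (tauMu μ M ω).toNat ω) :=
  ENat.toNat_biInf_natCast_mem hτ

variable [IsFiniteMeasure μ]

theorem ayProc_gMu_le_superQuantile {t : ℕ} {ω : Ω} (hS : 0 < runMax M t ω) :
    ayProc (gMu μ) M t ω ≤ superQuantile μ (runMax M t ω)⁻¹ :=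
  calG_gMu hS ▸ ayProc_le_calG (calG'_nonneg (gMu_monotoneOn.mono (Ici_subset_Ioi.2 hS)))

theorem ayProc_gMu_le_superQuantile_of_forall_lt (hmean : Integrable id μ) {ω : Ω}
    (h0 : M 0 ω = 1) {r : ℝ} (hr : 0 < r) (hM : ∀ t, M t ω < r⁻¹) (s : ℕ) :
    ayProc (gMu μ) M s ω ≤ superQuantile μ r := by
  have hS := one_le_runMax h0 s
  have hS0 : 0 < runMax M s ω := one_pos.trans_le hS
  obtain ⟨t, ht⟩ := exists_runMax_eq s ω
  have hrS : r ≤ (runMax M s ω)⁻¹ := le_inv_of_le_inv₀ hS0 (ht ▸ (hM t).le)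
  have hr1 : r ≤ 1 := (one_le_inv₀ hr).1 (h0 ▸ (hM 0).le)
  exact (ayProc_gMu_le_superQuantile hS0).trans
    (superQuantile_antitoneOn hmean ⟨hr, hr1⟩ ⟨inv_pos.2 hS0, inv_le_one_of_one_le₀ hS⟩ hrS)

theorem exists_inv_le_of_superQuantile_lt_iSup (hmean : Integrable id μ) {ω : Ω}
    (h0 : M 0 ω = 1) {r c : ℝ} (hr : 0 < r) {ι : Type*} (s : ι → ℕ)
    (hc : superQuantile μ r < c) (hcY : (c : EReal) ≤ ⨆ i, (ayProc (gMu μ) M (s i) ω : EReal)) :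
    ∃ t, r⁻¹ ≤ M t ω := by
  by_contra! hM
  have hY := ayProc_gMu_le_superQuantile_of_forall_lt hmean h0 hr hM
  exact hc.not_ge (EReal.coe_le_coe_iff.1
    (hcY.trans (iSup_le fun i => EReal.coe_le_coe_iff.2 (hY (s i)))))

theorem exists_inv_le_of_le_ayProc_tauMu {ω : Ω} (h0 : M 0 ω = 1) {r c : ℝ} (hr : 0 < r)
    (hc : 0 < c) (hτ : tauMu μ M ω ≠ ⊤) (hcY : c ≤ ayProc (gMu μ) M (tauMu μ M ω).toNat ω)
    (hμ : μ (Ici c) < ENNReal.ofReal r) : ∃ t, r⁻¹ ≤ M t ω := by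
  have hS := one_pos.trans_le (one_le_runMax h0 (tauMu μ M ω).toNat)
  have hSr := (ofReal_le_measure_Ici_of_le_tailQuantile hc
    (hcY.trans (ayProc_tauMu_le_gMu hτ))).trans_lt hμ
  rw [ENNReal.ofReal_lt_ofReal_iff hr, one_div_lt hS hr] at hSr
  obtain ⟨t, ht⟩ := exists_runMax_eq (M := M) (tauMu μ M ω).toNat ω
  exact ⟨t, by rw [← ht, ← one_div]; exact hSr.le⟩

end RunningMax

/-- The maximum of `Y` up to `τ^μ` is stochastically dominated by the Hardy–Littlewood
transform of `μ`, and the stopped statistic `Y_{τ^μ}` is stochastically dominated by `μ`. -/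
theorem stmt15 {Ω : Type*} {m0 : MeasurableSpace Ω} {P : Measure Ω} [IsProbabilityMeasure P]
    (ℱ : Filtration ℕ m0) (M : ℕ → Ω → ℝ)
    (hsuper : Supermartingale M ℱ P) (hnonneg : ∀ t ω, 0 ≤ M t ω)
    (hone : ∀ ω, M 0 ω = 1)
    (μ : Measure ℝ) [IsProbabilityMeasure μ]
    (hsupp : μ (Set.Iio 0) = 0) (hmean : Integrable id μ) :
    (∀ c : ℝ,
      P {ω | (c : EReal) ≤
          ⨆ s : {s : ℕ // (s : ℕ∞) ≤ tauMu μ M ω}, ((ayProc (gMu μ) M s.1 ω : ℝ) : EReal)}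
        ≤ volume {ξ : ℝ | ξ ∈ Set.Ioc (0 : ℝ) 1 ∧ c ≤ superQuantile μ ξ})
    ∧ (∀ c : ℝ,
        P {ω | tauMu μ M ω ≠ ⊤ ∧ c ≤ ayProc (gMu μ) M (tauMu μ M ω).toNat ω}
          ≤ μ (Set.Ici c)) := by
  have hint : ∫ ω, M 0 ω ∂P ≤ 1 := by simp [hone]
  refine ⟨fun c => hsuper.measure_le_of_forall_subset_exists_le hnonneg hint
      fun r hr hr1 hvol ω hω => ?_,
    fun c => hsuper.measure_le_of_forall_subset_exists_le hnonneg hint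
      fun r hr hr1 hμ ω hω => ?_⟩
  · exact exists_inv_le_of_superQuantile_lt_iSup hmean (hone ω) hr Subtype.val
      (superQuantile_lt_of_volume_lt hmean hr1.le hvol) hω
  · have hc := pos_of_measure_Ici_lt_one hsupp (hμ.trans (by simpa using hr1))
    exact exists_inv_le_of_le_ayProc_tauMu (hone ω) hr hc hω.1 hω.2 hμ
end

section
/- Let B = (B_t)_{t∈ℕ} be any adapted real-valued process with B_0 = G(1). Define M and S recursively by M_0 = S_0 = 1, M_t := M_{t−1} + (B_t − B_{t−1})/G′(S_{t−1}), and S_t := max(S_{t−1}, M_t). Then S_t = max_{s ≤ t} M_s for all t, and pathwise for every t ≥ 1: B_t − B_{t−1} = (M_t − M_{t−1})·G′(S_{t−1}) and max_{s ≤ t} B_s − B_t = (S_t − M_t)·G′(S_t). The pair (M, S) is the almost surely unique pair of processes with M_0 = S_0 = 1 such that S is the running maximum of M and the first difference equation holds for all t ≥ 1. Moreover, if B is a supermartingale (respectively a martingale) and each M_t is integrable, then M is a supermartingale (respectively a martingale). -/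
open MeasureTheory Filter Set

/-- The pair `(M_t, S_t)` defined recursively from `B`:
`M_0 = S_0 = 1`, `M_t = M_{t−1} + (B_t − B_{t−1})/G′(S_{t−1})`, `S_t = max(S_{t−1}, M_t)`. -/
noncomputable def msRec {Ω : Type*} (G' : ℝ → ℝ) (B : ℕ → Ω → ℝ) (ω : Ω) : ℕ → ℝ × ℝ
  | 0 => (1, 1)
  | t + 1 =>
    let p := msRec G' B ω t
    let m := p.1 + (B (t + 1) ω - B t ω) / G' p.2
    (m, max p.2 m)

/-- The variation process `M` of the martingale-max decomposition. -/
noncomputable def Mvar {Ω : Type*} (G' : ℝ → ℝ) (B : ℕ → Ω → ℝ) (t : ℕ) (ω : Ω) : ℝ :=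
  (msRec G' B ω t).1

/-- The running-maximum process `S` of the martingale-max decomposition. -/
noncomputable def Svar {Ω : Type*} (G' : ℝ → ℝ) (B : ℕ → Ω → ℝ) (t : ℕ) (ω : Ω) : ℝ :=
  (msRec G' B ω t).2

/-! The identities are pathwise bookkeeping along the recursion. Since `S ≥ 1` and `G' > 0`
there, the recursion for `M` is the first difference equation solved for `M_{t+1}`, which also
gives uniqueness by induction. The second identity propagates because at each step either
`M_{t+1} ≤ S_t`, and then neither `S` nor the running maximum of `B` moves, or `M_{t+1} > S_t`,
and then `B_{t+1}` is a new maximum of `B` and both sides vanish.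

The increment of `M` is the increment of `B` multiplied by the `ℱ_t`-measurable factor
`1 / G'(S_t) ≥ 0`, so `M` is a martingale transform of `B`; pulling that factor out of the
conditional expectation transfers the (super)martingale property from `B` to `M`. -/

namespace MeasureTheory

variable {Ω : Type*} {m0 : MeasurableSpace Ω} {μ : Measure Ω} {ℱ : Filtration ℕ m0}
  {f g c : ℕ → Ω → ℝ}

theorem condExp_sub_eq_mul_condExp_sub (hf : ∀ n, Integrable (f n) μ)
    (hg : ∀ n, Integrable (g n) μ) (hc : ∀ n, StronglyMeasurable[ℱ n] (c n))
    (hgc : ∀ n, g (n + 1) - g n = c n * (f (n + 1) - f n)) (n : ℕ) :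
    μ[g (n + 1) - g n | ℱ n] =ᵐ[μ] c n * μ[f (n + 1) - f n | ℱ n] := by
  rw [hgc n]
  exact condExp_mul_of_stronglyMeasurable_left (hc n) (hgc n ▸ (hg _).sub (hg _))
    ((hf _).sub (hf _))

theorem Martingale.condExp_succ_sub_eq_zero [IsFiniteMeasure μ] (hf : Martingale f ℱ μ)
    (n : ℕ) : μ[f (n + 1) - f n | ℱ n] =ᵐ[μ] 0 := by
  filter_upwards [condExp_sub (hf.integrable (n + 1)) (hf.integrable n) (ℱ n),
    hf.condExp_ae_eq n.le_succ] with ω hsub hsucc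
  rw [hsub, Pi.sub_apply, hsucc,
    condExp_of_stronglyMeasurable (ℱ.le n) (hf.stronglyAdapted n) (hf.integrable n),
    Pi.zero_apply, sub_self]

theorem Martingale.of_sub_eq_mul [IsFiniteMeasure μ] (hf : Martingale f ℱ μ)
    (hg_adapted : StronglyAdapted ℱ g) (hg : ∀ n, Integrable (g n) μ)
    (hc : ∀ n, StronglyMeasurable[ℱ n] (c n))
    (hgc : ∀ n, g (n + 1) - g n = c n * (f (n + 1) - f n)) : Martingale g ℱ μ :=
  martingale_of_condExp_sub_eq_zero_nat hg_adapted hg fun n => by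
    filter_upwards [condExp_sub_eq_mul_condExp_sub hf.integrable hg hc hgc n,
      hf.condExp_succ_sub_eq_zero n] with ω htransform hzero
    simp only [htransform, Pi.mul_apply, hzero, Pi.zero_apply, mul_zero]

theorem Submartingale.of_sub_eq_mul [IsFiniteMeasure μ] (hf : Submartingale f ℱ μ)
    (hg_adapted : StronglyAdapted ℱ g) (hg : ∀ n, Integrable (g n) μ)
    (hc : ∀ n, StronglyMeasurable[ℱ n] (c n)) (hc_nonneg : ∀ n ω, 0 ≤ c n ω)
    (hgc : ∀ n, g (n + 1) - g n = c n * (f (n + 1) - f n)) : Submartingale g ℱ μ :=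
  submartingale_of_condExp_sub_nonneg_nat hg_adapted hg fun n => by
    filter_upwards [condExp_sub_eq_mul_condExp_sub hf.integrable hg hc hgc n,
      hf.condExp_sub_nonneg n.le_succ] with ω htransform hnonneg
    rw [htransform, Pi.mul_apply]
    exact mul_nonneg (hc_nonneg n ω) hnonneg

theorem Supermartingale.of_sub_eq_mul [IsFiniteMeasure μ] (hf : Supermartingale f ℱ μ)
    (hg_adapted : StronglyAdapted ℱ g) (hg : ∀ n, Integrable (g n) μ)
    (hc : ∀ n, StronglyMeasurable[ℱ n] (c n)) (hc_nonneg : ∀ n ω, 0 ≤ c n ω)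
    (hgc : ∀ n, g (n + 1) - g n = c n * (f (n + 1) - f n)) : Supermartingale g ℱ μ := by
  rw [← neg_neg g]
  refine (hf.neg.of_sub_eq_mul hg_adapted.neg (fun n => (hg n).neg) hc hc_nonneg
    fun n => ?_).neg
  simp only [Pi.neg_apply, neg_sub_neg]
  rw [← neg_sub, hgc n, ← neg_sub (f n), mul_neg, neg_neg]

end MeasureTheory

theorem ContinuousOn.measurable_comp {α β γ : Type*} {mα : MeasurableSpace α}
    [TopologicalSpace β] [MeasurableSpace β] [OpensMeasurableSpace β] [TopologicalSpace γ]
    [MeasurableSpace γ] [BorelSpace γ] {g : β → γ} {s : Set β} (hg : ContinuousOn g s)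
    {f : α → β} (hf : Measurable f) (hfs : ∀ a, f a ∈ s) : Measurable fun a => g (f a) :=
  hg.domRestrict.measurable.comp (hf.subtype_mk (h := hfs))

section Decomposition

variable {Ω : Type*} {G' : ℝ → ℝ} {B : ℕ → Ω → ℝ}

theorem runMax_zero (M : ℕ → Ω → ℝ) (ω : Ω) : runMax M 0 ω = M 0 ω := by
  simp [runMax]

theorem runMax_succ (M : ℕ → Ω → ℝ) (t : ℕ) (ω : Ω) :
    runMax M (t + 1) ω = max (M (t + 1) ω) (runMax M t ω) := by
  simp [runMax, Finset.range_add_one, Finset.sup'_insert]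

@[simp] theorem Mvar_zero (ω : Ω) : Mvar G' B 0 ω = 1 := rfl

@[simp] theorem Svar_zero (ω : Ω) : Svar G' B 0 ω = 1 := rfl

theorem Mvar_succ (t : ℕ) (ω : Ω) :
    Mvar G' B (t + 1) ω = Mvar G' B t ω + (B (t + 1) ω - B t ω) / G' (Svar G' B t ω) := rfl

theorem Svar_succ (t : ℕ) (ω : Ω) :
    Svar G' B (t + 1) ω = max (Svar G' B t ω) (Mvar G' B (t + 1) ω) := rfl

theorem one_le_Svar (t : ℕ) (ω : Ω) : 1 ≤ Svar G' B t ω := by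
  induction t with
  | zero => exact le_rfl
  | succ t ih => exact ih.trans (le_max_left _ _)

theorem Svar_pos (t : ℕ) (ω : Ω) : 0 < Svar G' B t ω :=
  one_pos.trans_le (one_le_Svar t ω)

theorem Svar_eq_runMax (t : ℕ) (ω : Ω) : Svar G' B t ω = runMax (Mvar G' B) t ω := by
  induction t with
  | zero => rw [runMax_zero, Mvar_zero, Svar_zero]
  | succ t ih => rw [runMax_succ, Svar_succ, ih, max_comm]

theorem sub_eq_Mvar_sub_mul (hG' : ∀ x ∈ Ioi (0 : ℝ), 0 < G' x) (t : ℕ) (ω : Ω) :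
    B (t + 1) ω - B t ω = (Mvar G' B (t + 1) ω - Mvar G' B t ω) * G' (Svar G' B t ω) := by
  rw [Mvar_succ, add_sub_cancel_left, div_mul_cancel₀ _ (hG' _ (Svar_pos t ω)).ne']

theorem runMax_sub_eq_Svar_sub_Mvar_mul (hG' : ∀ x ∈ Ioi (0 : ℝ), 0 < G' x)
    (t : ℕ) (ω : Ω) :
    runMax B t ω - B t ω = (Svar G' B t ω - Mvar G' B t ω) * G' (Svar G' B t ω) := by
  induction t with
  | zero => rw [runMax_zero, Svar_zero, Mvar_zero, sub_self, sub_self, zero_mul]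
  | succ t ih =>
    have hG'S := hG' _ (Svar_pos (G' := G') (B := B) t ω)
    have hstep : runMax B t ω - B (t + 1) ω
        = (Svar G' B t ω - Mvar G' B (t + 1) ω) * G' (Svar G' B t ω) := by
      linear_combination ih - sub_eq_Mvar_sub_mul hG' t ω
    rw [runMax_succ, Svar_succ]
    rcases le_total (Mvar G' B (t + 1) ω) (Svar G' B t ω) with hM | hM
    · have hB : B (t + 1) ω ≤ runMax B t ω :=
        sub_nonneg.mp (hstep ▸ mul_nonneg (sub_nonneg.mpr hM) hG'S.le)
      rw [max_eq_left hM, max_eq_right hB, hstep]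
    · have hB : runMax B t ω ≤ B (t + 1) ω :=
        sub_nonpos.mp (hstep ▸ mul_nonpos_of_nonpos_of_nonneg (sub_nonpos.mpr hM) hG'S.le)
      rw [max_eq_right hM, max_eq_left hB, sub_self, sub_self, zero_mul]

theorem eq_Mvar_and_eq_Svar (hG' : ∀ x ∈ Ioi (0 : ℝ), 0 < G' x) {M S : ℕ → Ω → ℝ}
    {ω : Ω} (hM0 : M 0 ω = 1) (hS : ∀ t, S t ω = runMax M t ω)
    (hMB : ∀ t, B (t + 1) ω - B t ω = (M (t + 1) ω - M t ω) * G' (S t ω)) (t : ℕ) :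
    M t ω = Mvar G' B t ω ∧ S t ω = Svar G' B t ω := by
  induction t with
  | zero => exact ⟨hM0, (hS 0).trans (runMax_zero M ω ▸ hM0)⟩
  | succ t ih =>
    obtain ⟨hMt, hSt⟩ := ih
    have hincr := mul_right_cancel₀ (hG' _ (Svar_pos t ω)).ne'
      (hSt ▸ hMt ▸ (hMB t).symm.trans (sub_eq_Mvar_sub_mul hG' t ω))
    have hMt1 : M (t + 1) ω = Mvar G' B (t + 1) ω := by linarith
    refine ⟨hMt1, ?_⟩
    rw [hS, runMax_succ, ← hS, hMt1, hSt, Svar_succ, max_comm]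

theorem measurable_Mvar_and_Svar {m0 : MeasurableSpace Ω} {ℱ : Filtration ℕ m0}
    (hG' : ContinuousOn G' (Ioi 0)) (hB : Adapted ℱ B) (t : ℕ) :
    Measurable[ℱ t] (Mvar G' B t) ∧ Measurable[ℱ t] (Svar G' B t) := by
  induction t with
  | zero => exact ⟨measurable_const, measurable_const⟩
  | succ t ih =>
    have hmono := ℱ.mono t.le_succ
    have hG'S : Measurable[ℱ t] fun ω => G' (Svar G' B t ω) :=
      hG'.measurable_comp ih.2 (Svar_pos t)
    have hM : Measurable[ℱ (t + 1)] (Mvar G' B (t + 1)) :=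
      (ih.1.mono hmono le_rfl).add (((hB (t + 1)).sub ((hB t).mono hmono le_rfl)).div
        (hG'S.mono hmono le_rfl))
    exact ⟨hM, (ih.2.mono hmono le_rfl).max hM⟩

end Decomposition

theorem stmt18_general {Ω : Type*} {m0 : MeasurableSpace Ω} {P : Measure Ω} [IsProbabilityMeasure P]
    (ℱ : Filtration ℕ m0)
    (G' : ℝ → ℝ)
    (hG'cont : ContinuousOn G' (Set.Ioi 0))
    (hG'pos : ∀ x ∈ Set.Ioi (0 : ℝ), 0 < G' x)
    (B : ℕ → Ω → ℝ) (hadapt : Adapted ℱ B) :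
    (∀ t ω, Svar G' B t ω = runMax (Mvar G' B) t ω)
    ∧ (∀ t ω, B (t + 1) ω - B t ω
        = (Mvar G' B (t + 1) ω - Mvar G' B t ω) * G' (Svar G' B t ω))
    ∧ (∀ t ω, runMax B t ω - B t ω
        = (Svar G' B t ω - Mvar G' B t ω) * G' (Svar G' B t ω))
    ∧ (∀ M' S' : ℕ → Ω → ℝ,
        (∀ᵐ ω ∂P, M' 0 ω = 1 ∧ S' 0 ω = 1 ∧ (∀ t, S' t ω = runMax M' t ω) ∧
          ∀ t, B (t + 1) ω - B t ω = (M' (t + 1) ω - M' t ω) * G' (S' t ω)) →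
        ∀ᵐ ω ∂P, ∀ t, M' t ω = Mvar G' B t ω ∧ S' t ω = Svar G' B t ω)
    ∧ (Supermartingale B ℱ P → (∀ t, Integrable (Mvar G' B t) P) →
        Supermartingale (Mvar G' B) ℱ P)
    ∧ (Martingale B ℱ P → (∀ t, Integrable (Mvar G' B t) P) →
        Martingale (Mvar G' B) ℱ P) := by
  have hMS := measurable_Mvar_and_Svar hG'cont hadapt
  have hM_adapted : StronglyAdapted ℱ (Mvar G' B) := fun t => (hMS t).1.stronglyMeasurable
  have hc : ∀ t, StronglyMeasurable[ℱ t] fun ω => (G' (Svar G' B t ω))⁻¹ := fun t =>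
    (hG'cont.measurable_comp (hMS t).2 (Svar_pos t)).inv.stronglyMeasurable
  have hc_nonneg : ∀ t ω, 0 ≤ (G' (Svar G' B t ω))⁻¹ := fun t ω =>
    inv_nonneg.mpr (hG'pos _ (Svar_pos t ω)).le
  have hincr : ∀ t, Mvar G' B (t + 1) - Mvar G' B t
      = (fun ω => (G' (Svar G' B t ω))⁻¹) * (B (t + 1) - B t) := fun t => funext fun ω => by
    rw [Pi.sub_apply, Mvar_succ, add_sub_cancel_left, div_eq_inv_mul]; rfl
  refine ⟨Svar_eq_runMax, sub_eq_Mvar_sub_mul hG'pos, runMax_sub_eq_Svar_sub_Mvar_mul hG'pos,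
    fun M' S' h => ?_, fun hB hM => hB.of_sub_eq_mul hM_adapted hM hc hc_nonneg hincr,
    fun hB hM => hB.of_sub_eq_mul hM_adapted hM hc hincr⟩
  exact h.mono fun ω ⟨hM0, _, hS, hMB⟩ => eq_Mvar_and_eq_Svar hG'pos hM0 hS hMB

/-- Martingale-max decomposition: any process `B` started at `G(1)` decomposes uniquely into
a variation process `M` and its running maximum `S` satisfying the difference equations. -/
theorem stmt18 {Ω : Type*} {m0 : MeasurableSpace Ω} {P : Measure Ω} [IsProbabilityMeasure P]
    (ℱ : Filtration ℕ m0)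
    (G G' : ℝ → ℝ)
    (hG0 : ∀ x ∈ Set.Ioi (0 : ℝ), 0 ≤ G x)
    (hGconc : ConcaveOn ℝ (Set.Ioi 0) G)
    (hGstrict : StrictMonoOn G (Set.Ioi 0))
    (hG' : ∀ x ∈ Set.Ioi (0 : ℝ), HasDerivAt G (G' x) x)
    (hG'cont : ContinuousOn G' (Set.Ioi 0))
    (hG'pos : ∀ x ∈ Set.Ioi (0 : ℝ), 0 < G' x)
    (B : ℕ → Ω → ℝ) (hadapt : Adapted ℱ B)
    (hB0 : ∀ ω, B 0 ω = G 1) :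
    (∀ t ω, Svar G' B t ω = runMax (Mvar G' B) t ω)
    ∧ (∀ t ω, B (t + 1) ω - B t ω
        = (Mvar G' B (t + 1) ω - Mvar G' B t ω) * G' (Svar G' B t ω))
    ∧ (∀ t ω, runMax B t ω - B t ω
        = (Svar G' B t ω - Mvar G' B t ω) * G' (Svar G' B t ω))
    ∧ (∀ M' S' : ℕ → Ω → ℝ,
        (∀ᵐ ω ∂P, M' 0 ω = 1 ∧ S' 0 ω = 1 ∧ (∀ t, S' t ω = runMax M' t ω) ∧
          ∀ t, B (t + 1) ω - B t ω = (M' (t + 1) ω - M' t ω) * G' (S' t ω)) →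
        ∀ᵐ ω ∂P, ∀ t, M' t ω = Mvar G' B t ω ∧ S' t ω = Svar G' B t ω)
    ∧ (Supermartingale B ℱ P → (∀ t, Integrable (Mvar G' B t) P) →
        Supermartingale (Mvar G' B) ℱ P)
    ∧ (Martingale B ℱ P → (∀ t, Integrable (Mvar G' B t) P) →
        Martingale (Mvar G' B) ℱ P) :=
  stmt18_general ℱ G' hG'cont hG'pos B hadapt
end
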